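/- Let A and Â be real symmetric p×p matrices with eigenvalues λ₁ ≥ λ₂ ≥ … ≥ λ_p and λ̂₁ ≥ λ̂₂ ≥ … ≥ λ̂_p respectively, and let v_i and v̂_i be unit-norm eigenvectors of A and Â corresponding to λ_i and λ̂_i. Fix an index i with 1 ≤ i ≤ p and suppose min(|λ̂_{i-1} − λ_i|, |λ̂_{i+1} − λ_i|) > 0 (interpreting λ̂₀ = +∞ and λ̂_{p+1} = −∞). Then there is a sign s ∈ {−1, +1} such that ‖s·v̂_i − v_i‖ ≤ 2^{3/2}·‖A − Â‖ / min(|λ̂_{i-1} − λ_i|, |λ̂_{i+1} − λ_i|), where ‖A − Â‖ is the spectral norm and ‖s·v̂_i − v_i‖ the Euclidean norm. -/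

import Mathlib

open Matrix

/-- The spectral norm (largest singular value) of a real matrix, as the
operator norm of the induced map between Euclidean spaces. -/
noncomputable def specNorm {m n : ℕ} (A : Matrix (Fin m) (Fin n) ℝ) : ℝ :=
  ‖(Matrix.toEuclideanLin A).toContinuousLinearMap‖

/-- The Euclidean (ℓ2) norm of a real vector. -/
noncomputable def vecNorm {n : ℕ} (x : Fin n → ℝ) : ℝ :=
  Real.sqrt (∑ i, x i ^ 2)

/-!
Write `vᵢ` in the orthonormal eigenbasis `(v̂ₗ)` of `Â`. Since `(Â - λᵢ) vᵢ = (Â - A) vᵢ`,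
Parseval gives `∑ₗ (λ̂ₗ - λᵢ)² ⟨v̂ₗ, vᵢ⟩² ≤ ‖A - Â‖²`. If every `λ̂ₗ` with `l ≠ i` is at distance
at least `gap` from `λᵢ`, the mass `1 - ⟨v̂ᵢ, vᵢ⟩²` off `v̂ᵢ` is therefore at most
`‖A - Â‖² / gap²`, and choosing `s` as the sign of `⟨v̂ᵢ, vᵢ⟩` gives
`‖s v̂ᵢ - vᵢ‖² ≤ 2 (1 - ⟨v̂ᵢ, vᵢ⟩²) ≤ 2 ‖A - Â‖² / gap²`.

The hypotheses only separate `λ̂ᵢ₋₁` and `λ̂ᵢ₊₁` from `λᵢ`. When `‖A - Â‖ < gap`, Weyl's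
inequality `|λⱼ - λ̂ⱼ| ≤ ‖A - Â‖` fixes on which side of `λᵢ` they lie, and monotonicity then
separates all `λ̂ₗ`, `l ≠ i`; when `‖A - Â‖ ≥ gap` the bound exceeds `2` and holds for any sign.
Weyl's inequality is the Courant–Fischer argument with a nonzero test vector orthogonal to the
`vₗ`, `l > j`, and to the `v̂ₗ`, `l < j`, which exists by counting dimensions.
-/

open scoped RealInnerProductSpace

lemma exists_sign_norm_smul_sub_sq_le {E : Type*} [NormedAddCommGroup E] [InnerProductSpace ℝ E]
    {u v : E} (hu : ‖u‖ = 1) (hv : ‖v‖ = 1) :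
    ∃ s : ℝ, (s = 1 ∨ s = -1) ∧ ‖s • u - v‖ ^ 2 ≤ 2 * (1 - ⟪u, v⟫ ^ 2) := by
  have hc : |⟪u, v⟫| ≤ 1 := by simpa [hu, hv] using abs_real_inner_le_norm u v
  have hexpand (s : ℝ) (hs : s = 1 ∨ s = -1) : ‖s • u - v‖ ^ 2 = 2 - 2 * (s * ⟪u, v⟫) := by
    have hs2 : s ^ 2 = 1 := by rcases hs with rfl | rfl <;> norm_num
    rw [norm_sub_sq_real, norm_smul, inner_smul_left, mul_pow, hu, hv, Real.norm_eq_abs, sq_abs,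
      hs2]
    simp only [conj_trivial]
    ring
  have hsq : ⟪u, v⟫ ^ 2 ≤ |⟪u, v⟫| := by
    rw [← sq_abs]; nlinarith [abs_nonneg ⟪u, v⟫]
  rcases le_total 0 ⟪u, v⟫ with h | h
  · refine ⟨1, .inl rfl, ?_⟩
    rw [hexpand 1 (.inl rfl)]
    rw [abs_of_nonneg h] at hsq
    linarith
  · refine ⟨-1, .inr rfl, ?_⟩
    rw [hexpand (-1) (.inr rfl)]
    rw [abs_of_nonpos h] at hsq
    linarith

lemma Module.Basis.repr_apply_of_apply_eq_smul {ι K V : Type*} [CommRing K] [AddCommGroup V]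
    [Module K V] (b : Module.Basis ι K V) {T : V →ₗ[K] V} {lam : ι → K}
    (hT : ∀ l, T (b l) = lam l • b l) (x : V) (l : ι) :
    b.repr (T x) l = lam l * b.repr x l := by
  have : (b.coord l).comp T = lam l • b.coord l := b.ext fun m => by
    rcases eq_or_ne m l with rfl | h <;> simp [*]
  exact LinearMap.congr_fun this x

lemma Module.Basis.exists_ne_zero_repr_eq_zero {n : ℕ} {K V : Type*} [Field K] [AddCommGroup V]
    [Module K V] (b b' : Module.Basis (Fin n) K V) (j : Fin n) :
    ∃ w ≠ 0, ∀ l, (j < l → b.repr w l = 0) ∧ (l < j → b'.repr w l = 0) := by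
  classical
  have : FiniteDimensional K V := b.finiteDimensional_of_finite
  let f : V →ₗ[K] Fin n → K := LinearMap.pi fun l =>
    if j < l then b.coord l else if l < j then b'.coord l else 0
  have hnotsurj : ¬ Function.Surjective f := fun hf => by
    obtain ⟨w, hw⟩ := hf (Pi.single j 1)
    simpa [f] using congrFun hw j
  have hnotinj : ¬ Function.Injective f := by
    rwa [LinearMap.injective_iff_surjective_of_finrank_eq_finrank
      (by simp [Module.finrank_eq_card_basis b])]
  obtain ⟨w, hwf, hw0⟩ : ∃ w, f w = 0 ∧ w ≠ 0 := by
    simpa [injective_iff_map_eq_zero, not_forall] using hnotinj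
  refine ⟨w, hw0, fun l => ⟨fun hl => ?_, fun hl => ?_⟩⟩
  · simpa [f, hl] using congrFun hwf l
  · simpa [f, hl, hl.not_gt] using congrFun hwf l

namespace OrthonormalBasis
variable {ι E : Type*} [Fintype ι] [NormedAddCommGroup E] [InnerProductSpace ℝ E]
  (b : OrthonormalBasis ι ℝ E) {T : E →L[ℝ] E} {lam : ι → ℝ}

lemma inner_apply_of_apply_eq_smul (hT : ∀ l, T (b l) = lam l • b l) (x : E) (l : ι) :
    ⟪b l, T x⟫ = lam l * ⟪b l, x⟫ := by
  simpa [b.coe_toBasis_repr_apply, b.repr_apply_apply] using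
    b.toBasis.repr_apply_of_apply_eq_smul (T := T.toLinearMap) (by simpa using hT) x l

lemma inner_apply_self_eq_sum (hT : ∀ l, T (b l) = lam l • b l) (x : E) :
    ⟪T x, x⟫ = ∑ l, lam l * ⟪b l, x⟫ ^ 2 := by
  rw [← b.sum_inner_mul_inner]
  refine Finset.sum_congr rfl fun l _ => ?_
  rw [real_inner_comm, b.inner_apply_of_apply_eq_smul hT]
  ring

lemma mul_norm_sq_le_inner_apply_self (hT : ∀ l, T (b l) = lam l • b l) {μ : ℝ} {x : E}
    (hx : ∀ l, ⟪b l, x⟫ ≠ 0 → μ ≤ lam l) : μ * ‖x‖ ^ 2 ≤ ⟪T x, x⟫ := by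
  rw [b.inner_apply_self_eq_sum hT, ← b.sum_sq_inner_right, Finset.mul_sum]
  refine Finset.sum_le_sum fun l _ => ?_
  by_cases h : ⟪b l, x⟫ = 0
  · simp [h]
  · exact mul_le_mul_of_nonneg_right (hx l h) (sq_nonneg _)

lemma inner_apply_self_le_mul_norm_sq (hT : ∀ l, T (b l) = lam l • b l) {μ : ℝ} {x : E}
    (hx : ∀ l, ⟪b l, x⟫ ≠ 0 → lam l ≤ μ) : ⟪T x, x⟫ ≤ μ * ‖x‖ ^ 2 := by
  rw [b.inner_apply_self_eq_sum hT, ← b.sum_sq_inner_right, Finset.mul_sum]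
  refine Finset.sum_le_sum fun l _ => ?_
  by_cases h : ⟪b l, x⟫ = 0
  · simp [h]
  · exact mul_le_mul_of_nonneg_right (hx l h) (sq_nonneg _)

theorem sub_le_norm_sub_of_antitone {n : ℕ} (b b' : OrthonormalBasis (Fin n) ℝ E)
    {T T' : E →L[ℝ] E} {lam lam' : Fin n → ℝ} (hlam : Antitone lam) (hlam' : Antitone lam')
    (hT : ∀ l, T (b l) = lam l • b l) (hT' : ∀ l, T' (b' l) = lam' l • b' l) (j : Fin n) :
    lam j - lam' j ≤ ‖T - T'‖ := by
  obtain ⟨w, hw0, hw⟩ := b.toBasis.exists_ne_zero_repr_eq_zero b'.toBasis j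
  simp only [b.coe_toBasis_repr_apply, b'.coe_toBasis_repr_apply, b.repr_apply_apply,
    b'.repr_apply_apply] at hw
  have hlow : lam j * ‖w‖ ^ 2 ≤ ⟪T w, w⟫ :=
    b.mul_norm_sq_le_inner_apply_self hT fun l hl => hlam (not_lt.1 fun h => hl ((hw l).1 h))
  have hup : ⟪T' w, w⟫ ≤ lam' j * ‖w‖ ^ 2 :=
    b'.inner_apply_self_le_mul_norm_sq hT' fun l hl => hlam' (not_lt.1 fun h => hl ((hw l).2 h))
  have hop : ⟪(T - T') w, w⟫ ≤ ‖T - T'‖ * ‖w‖ ^ 2 := by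
    calc ⟪(T - T') w, w⟫ ≤ ‖(T - T') w‖ * ‖w‖ := real_inner_le_norm _ _
      _ ≤ ‖T - T'‖ * ‖w‖ * ‖w‖ := by gcongr; exact (T - T').le_opNorm w
      _ = ‖T - T'‖ * ‖w‖ ^ 2 := by ring
  rw [_root_.sub_apply, inner_sub_left] at hop
  have hpos : 0 < ‖w‖ ^ 2 := by positivity
  exact le_of_mul_le_mul_right (by linarith) hpos

lemma sq_mul_norm_sq_sub_inner_sq_le (hT : ∀ l, T (b l) = lam l • b l) {μ gap : ℝ}
    (hgap : 0 ≤ gap) {i : ι} (hsep : ∀ l ≠ i, gap ≤ |lam l - μ|) (x : E) :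
    gap ^ 2 * (‖x‖ ^ 2 - ⟪b i, x⟫ ^ 2) ≤ ‖T x - μ • x‖ ^ 2 := by
  classical
  have hres : ‖T x - μ • x‖ ^ 2 = ∑ l, (lam l - μ) ^ 2 * ⟪b l, x⟫ ^ 2 := by
    rw [← b.sum_sq_inner_right]
    refine Finset.sum_congr rfl fun l _ => ?_
    rw [inner_sub_right, inner_smul_right, b.inner_apply_of_apply_eq_smul hT]
    ring
  have hcompl : ‖x‖ ^ 2 - ⟪b i, x⟫ ^ 2 = ∑ l ∈ Finset.univ.erase i, ⟪b l, x⟫ ^ 2 := by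
    rw [← b.sum_sq_inner_right, ← Finset.add_sum_erase _ _ (Finset.mem_univ i),
      add_sub_cancel_left]
  rw [hres, hcompl, Finset.mul_sum]
  calc ∑ l ∈ Finset.univ.erase i, gap ^ 2 * ⟪b l, x⟫ ^ 2
      ≤ ∑ l ∈ Finset.univ.erase i, (lam l - μ) ^ 2 * ⟪b l, x⟫ ^ 2 := by
        refine Finset.sum_le_sum fun l hl => ?_
        have := pow_le_pow_left₀ hgap (hsep l (Finset.ne_of_mem_erase hl)) 2
        rw [sq_abs] at this
        gcongr
    _ ≤ ∑ l, (lam l - μ) ^ 2 * ⟪b l, x⟫ ^ 2 :=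
        Finset.sum_le_sum_of_subset_of_nonneg (Finset.subset_univ _) fun _ _ _ => by positivity

theorem exists_sign_norm_smul_sub_le {T' : E →L[ℝ] E} (hT : ∀ l, T (b l) = lam l • b l)
    {v : E} (hv : ‖v‖ = 1) {μ : ℝ} (hT'v : T' v = μ • v) {i : ι} {gap : ℝ} (hgap : 0 < gap)
    (hsep : ∀ l ≠ i, gap ≤ |lam l - μ|) :
    ∃ s : ℝ, (s = 1 ∨ s = -1) ∧ ‖s • b i - v‖ ≤ √2 * ‖T' - T‖ / gap := by
  obtain ⟨s, hs, hsq⟩ := exists_sign_norm_smul_sub_sq_le (b.orthonormal.1 i) hv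
  have hres : ‖T v - μ • v‖ ≤ ‖T' - T‖ := by
    calc ‖T v - μ • v‖ = ‖(T' - T) v‖ := by rw [_root_.sub_apply, hT'v, norm_sub_rev]
      _ ≤ ‖T' - T‖ * ‖v‖ := (T' - T).le_opNorm v
      _ = ‖T' - T‖ := by rw [hv, mul_one]
  have hangle := b.sq_mul_norm_sq_sub_inner_sq_le hT hgap.le hsep v
  rw [hv, one_pow] at hangle
  refine ⟨s, hs, ?_⟩
  rw [le_div_iff₀ hgap, ← pow_le_pow_iff_left₀ (by positivity) (by positivity) two_ne_zero]
  calc (‖s • b i - v‖ * gap) ^ 2 = ‖s • b i - v‖ ^ 2 * gap ^ 2 := by ring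
    _ ≤ 2 * (1 - ⟪b i, v⟫ ^ 2) * gap ^ 2 := by gcongr
    _ ≤ 2 * ‖T v - μ • v‖ ^ 2 := by linarith
    _ ≤ 2 * ‖T' - T‖ ^ 2 := by gcongr
    _ = (√2 * ‖T' - T‖) ^ 2 := by rw [mul_pow, Real.sq_sqrt zero_le_two]

end OrthonormalBasis

lemma le_abs_sub_of_ne_of_abs_sub_le {n : ℕ} {lam lamhat : Fin n → ℝ} (hlam : Antitone lam)
    (hlamhat : Antitone lamhat) {ε gap : ℝ} (hε : ∀ j, |lam j - lamhat j| ≤ ε) (hεgap : ε < gap)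
    {i : Fin n} (hpred : ∀ j : Fin n, (j : ℕ) + 1 = i → gap ≤ |lamhat j - lam i|)
    (hsucc : ∀ j : Fin n, (j : ℕ) = i + 1 → gap ≤ |lamhat j - lam i|) {l : Fin n} (hl : l ≠ i) :
    gap ≤ |lamhat l - lam i| := by
  rcases lt_or_gt_of_ne hl with hli | hil
  · set j : Fin n := ⟨i - 1, by omega⟩
    have hji : (j : ℕ) + 1 = i := by simp only [j]; omega
    have hgapj := le_abs'.1 (hpred j hji)
    have hεj := abs_le.1 (hε j)
    have : lam i ≤ lam j := hlam (Fin.le_def.2 (by omega))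
    have : lamhat j ≤ lamhat l := hlamhat (Fin.le_def.2 (by simp only [j]; omega))
    exact le_abs.2 (.inl (by rcases hgapj with h | h <;> linarith))
  · set j : Fin n := ⟨i + 1, by omega⟩
    have hgapj := le_abs'.1 (hsucc j rfl)
    have hεj := abs_le.1 (hε j)
    have : lam j ≤ lam i := hlam (Fin.le_def.2 (by simp only [j]; omega))
    have : lamhat l ≤ lamhat j := hlamhat (Fin.le_def.2 (by simp only [j]; omega))
    exact le_abs'.2 (.inl (by rcases hgapj with h | h <;> linarith))

section EuclideanSpace
variable {ι : Type*} [Fintype ι]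

lemma vecNorm_eq_norm_toLp {n : ℕ} (x : Fin n → ℝ) : vecNorm x = ‖WithLp.toLp 2 x‖ := by
  simp [vecNorm, EuclideanSpace.norm_eq]

lemma specNorm_sub {n : ℕ} (A B : Matrix (Fin n) (Fin n) ℝ) :
    specNorm (A - B) = ‖(toEuclideanLin A).toContinuousLinearMap -
      (toEuclideanLin B).toContinuousLinearMap‖ := by
  simp [specNorm]

lemma orthonormal_toLp_of_dotProduct [DecidableEq ι] {u : ι → ι → ℝ}
    (hu : ∀ j k, u j ⬝ᵥ u k = if j = k then 1 else 0) :
    Orthonormal ℝ fun j => WithLp.toLp 2 (u j) := by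
  rw [orthonormal_iff_ite]
  intro j k
  rw [EuclideanSpace.inner_toLp_toLp]
  simpa [dotProduct_comm] using hu j k

noncomputable def OrthonormalBasis.ofDotProduct [DecidableEq ι] (u : ι → ι → ℝ)
    (hu : ∀ j k, u j ⬝ᵥ u k = if j = k then 1 else 0) : OrthonormalBasis ι ℝ (EuclideanSpace ℝ ι) :=
  .mk (orthonormal_toLp_of_dotProduct hu)
    ((orthonormal_toLp_of_dotProduct hu).linearIndependent.span_eq_top_of_card_eq_finrank'
      (by simp)).ge

@[simp]
lemma OrthonormalBasis.ofDotProduct_apply [DecidableEq ι] (u : ι → ι → ℝ)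
    (hu : ∀ j k, u j ⬝ᵥ u k = if j = k then 1 else 0) (j : ι) :
    OrthonormalBasis.ofDotProduct u hu j = WithLp.toLp 2 (u j) :=
  congrFun (OrthonormalBasis.coe_mk _ _) j

lemma Matrix.toEuclideanLin_toLp_of_mulVec_eq_smul [DecidableEq ι] {A : Matrix ι ι ℝ}
    {x : ι → ℝ} {c : ℝ} (h : A *ᵥ x = c • x) :
    toEuclideanLin A (WithLp.toLp 2 x) = c • WithLp.toLp 2 x := by
  rw [Matrix.toLpLin_toLp, Matrix.toLin'_apply, h, WithLp.toLp_smul]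

end EuclideanSpace

lemma two_rpow_three_halves : (2 : ℝ) ^ ((3 : ℝ) / 2) = 2 * √2 := by
  rw [show (3 : ℝ) / 2 = 1 + 1 / 2 by norm_num, Real.rpow_add two_pos, Real.rpow_one,
    Real.sqrt_eq_rpow]

theorem davis_kahan_sin_theta_variant_general {p : ℕ}
    (A Ahat : Matrix (Fin p) (Fin p) ℝ)
    (lam lamhat : Fin p → ℝ)
    (v vhat : Fin p → (Fin p → ℝ))
    (hlam : Antitone lam) (hlamhat : Antitone lamhat)
    (hv : ∀ j k, v j ⬝ᵥ v k = if j = k then (1 : ℝ) else 0)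
    (hvhat : ∀ j k, vhat j ⬝ᵥ vhat k = if j = k then (1 : ℝ) else 0)
    (heig : ∀ j, A.mulVec (v j) = lam j • v j)
    (heighat : ∀ j, Ahat.mulVec (vhat j) = lamhat j • vhat j)
    (i : Fin p)
    (gap : ℝ) (hgap_pos : 0 < gap)
    (hgap_pred : ∀ j : Fin p, (j : ℕ) + 1 = (i : ℕ) → gap ≤ |lamhat j - lam i|)
    (hgap_succ : ∀ j : Fin p, (j : ℕ) = (i : ℕ) + 1 → gap ≤ |lamhat j - lam i|) :
    ∃ s : ℝ, (s = 1 ∨ s = -1) ∧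
      vecNorm (s • vhat i - v i) ≤ 2 ^ ((3 : ℝ) / 2) * specNorm (A - Ahat) / gap := by
  set T := (toEuclideanLin A).toContinuousLinearMap
  set That := (toEuclideanLin Ahat).toContinuousLinearMap
  set b := OrthonormalBasis.ofDotProduct v hv
  set bhat := OrthonormalBasis.ofDotProduct vhat hvhat
  have hT (j : Fin p) : T (b j) = lam j • b j := by
    rw [OrthonormalBasis.ofDotProduct_apply]
    exact Matrix.toEuclideanLin_toLp_of_mulVec_eq_smul (heig j)
  have hThat (j : Fin p) : That (bhat j) = lamhat j • bhat j := by
    rw [OrthonormalBasis.ofDotProduct_apply]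
    exact Matrix.toEuclideanLin_toLp_of_mulVec_eq_smul (heighat j)
  have hweyl (j : Fin p) : |lam j - lamhat j| ≤ ‖T - That‖ :=
    abs_sub_le_iff.2 ⟨b.sub_le_norm_sub_of_antitone bhat hlam hlamhat hT hThat j,
      norm_sub_rev T That ▸ bhat.sub_le_norm_sub_of_antitone b hlamhat hlam hThat hT j⟩
  have hsub (s : ℝ) : vecNorm (s • vhat i - v i) = ‖s • bhat i - b i‖ := by
    simp [vecNorm_eq_norm_toLp, b, bhat]
  simp only [hsub, specNorm_sub, two_rpow_three_halves]
  rcases lt_or_ge ‖T - That‖ gap with hsmall | hlarge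
  · obtain ⟨s, hs, hle⟩ := bhat.exists_sign_norm_smul_sub_le hThat (b.orthonormal.1 i) (hT i)
      hgap_pos fun l hl => le_abs_sub_of_ne_of_abs_sub_le hlam hlamhat hweyl hsmall hgap_pred
        hgap_succ hl
    refine ⟨s, hs, hle.trans ?_⟩
    gcongr
    linarith [Real.sqrt_nonneg 2]
  · refine ⟨1, .inl rfl, ?_⟩
    calc ‖(1 : ℝ) • bhat i - b i‖ ≤ ‖bhat i‖ + ‖b i‖ := by rw [one_smul]; exact norm_sub_le _ _
      _ = 2 * 1 := by rw [bhat.orthonormal.1 i, b.orthonormal.1 i]; norm_num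
      _ ≤ 2 * √2 * ‖T - That‖ / gap := by
        rw [mul_div_assoc]
        gcongr
        · exact le_mul_of_one_le_right zero_le_two (Real.one_le_sqrt.2 one_le_two)
        · exact (one_le_div hgap_pos).2 hlarge

/-- Variant of the Davis–Kahan sin θ theorem (Yu–Wang–Samworth).
`A` and `Ahat` are symmetric `p × p` matrices, `lam` and `lamhat` are their full
spectra listed in non-increasing order (with corresponding orthonormal
eigenvector families `v`, `vhat`).  `gap` is a positive lower bound on
`min (|λ̂_{i-1} − λ_i|, |λ̂_{i+1} − λ_i|)` (the conditions referring to indices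
outside `1..p` are interpreted as `λ̂₀ = +∞`, `λ̂_{p+1} = −∞`, i.e. omitted).
Then, up to a sign `s`, `‖s·v̂ᵢ − vᵢ‖ ≤ 2^{3/2} ‖A − Â‖ / gap`. -/
theorem davis_kahan_sin_theta_variant {p : ℕ}
    (A Ahat : Matrix (Fin p) (Fin p) ℝ)
    (hA : A.IsSymm) (hAhat : Ahat.IsSymm)
    (lam lamhat : Fin p → ℝ)
    (v vhat : Fin p → (Fin p → ℝ))
    (hlam : Antitone lam) (hlamhat : Antitone lamhat)
    (hv : ∀ j k, v j ⬝ᵥ v k = if j = k then (1 : ℝ) else 0)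
    (hvhat : ∀ j k, vhat j ⬝ᵥ vhat k = if j = k then (1 : ℝ) else 0)
    (heig : ∀ j, A.mulVec (v j) = lam j • v j)
    (heighat : ∀ j, Ahat.mulVec (vhat j) = lamhat j • vhat j)
    (i : Fin p)
    (gap : ℝ) (hgap_pos : 0 < gap)
    (hgap_pred : ∀ j : Fin p, (j : ℕ) + 1 = (i : ℕ) → gap ≤ |lamhat j - lam i|)
    (hgap_succ : ∀ j : Fin p, (j : ℕ) = (i : ℕ) + 1 → gap ≤ |lamhat j - lam i|) :
    ∃ s : ℝ, (s = 1 ∨ s = -1) ∧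
      vecNorm (s • vhat i - v i) ≤ 2 ^ ((3 : ℝ) / 2) * specNorm (A - Ahat) / gap :=
  davis_kahan_sin_theta_variant_general A Ahat lam lamhat v vhat hlam hlamhat hv hvhat heig heighat
    i gap hgap_pos hgap_pred hgap_succ
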